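/- arXiv:1412.0632 — 2 statements merged into one kernel-verified Lean document; each statement's English description precedes it below -/
import Mathlib

section
/- Let g, g' be isolated hypersurface singularity germs at 0 ∈ ℂⁿ with g'(y) = u(y)·g(φ(y)) for a unit u ∈ 𝒪_n and a biholomorphism germ φ: (ℂⁿ,0) → (ℂⁿ,0). Then for every k = 1,...,n+1, the local algebras H_k(g') and H_k(g) are isomorphic as ℂ-algebras; in particular χ_k(g) = χ_k(g') for all k. -/
set_option synthInstance.maxHeartbeats 1000000
set_option maxHeartbeats 2000000
set_option linter.unusedVariables false


open MvPowerSeries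

/-- The formal partial derivative `∂f/∂y_i` of a formal power series, playing the
role of differentiation in the local ring `𝒪_n` of germs. -/
noncomputable def pd {n : ℕ} (i : Fin n) (f : MvPowerSeries (Fin n) ℂ) :
    MvPowerSeries (Fin n) ℂ :=
  fun m => ((m i : ℂ) + 1) * f (m + Finsupp.single i 1)

/-- The local Hessian matrix `(g_{ij})` of second order partial derivatives. -/
noncomputable def hessianMatrix {n : ℕ} (g : MvPowerSeries (Fin n) ℂ) :
    Matrix (Fin n) (Fin n) (MvPowerSeries (Fin n) ℂ) :=
  Matrix.of fun i j => pd i (pd j g)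

/-- The ideal generated by all `k × k` minors of a square matrix.  (Minors with
repeated rows or columns vanish, so for `k > n` this ideal is zero, matching the
convention `h_{n+1}(g) = 0`.) -/
noncomputable def minorsIdeal {n : ℕ} {R : Type*} [CommRing R]
    (M : Matrix (Fin n) (Fin n) R) (k : ℕ) : Ideal R :=
  Ideal.span {x | ∃ r c : Fin k → Fin n, x = (M.submatrix r c).det}

/-- The Jacobian ideal `J_g` of a germ `g`. -/
noncomputable def jacobianIdeal {n : ℕ} (g : MvPowerSeries (Fin n) ℂ) :
    Ideal (MvPowerSeries (Fin n) ℂ) :=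
  Ideal.span (Set.range fun i => pd i g)

/-- The ideal `(g) + J_g + h_k(g)` defining the local `k`-th Hessian algebra
`H_k(g)` of the germ `g`. -/
noncomputable def hessianAlgIdeal {n : ℕ} (g : MvPowerSeries (Fin n) ℂ) (k : ℕ) :
    Ideal (MvPowerSeries (Fin n) ℂ) :=
  Ideal.span {g} ⊔ jacobianIdeal g ⊔ minorsIdeal (hessianMatrix g) k

/-- The `k`-th Hessian number `χ_k(g) = dim_ℂ H_k(g)`. -/
noncomputable def chi {n : ℕ} (g : MvPowerSeries (Fin n) ℂ) (k : ℕ) : ℕ :=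
  Module.finrank ℂ (MvPowerSeries (Fin n) ℂ ⧸ hessianAlgIdeal g k)

/-- The Tjurina number `τ(g) = dim_ℂ 𝒪_n/((g) + J_g)`. -/
noncomputable def tjurina {n : ℕ} (g : MvPowerSeries (Fin n) ℂ) : ℕ :=
  Module.finrank ℂ (MvPowerSeries (Fin n) ℂ ⧸ (Ideal.span {g} ⊔ jacobianIdeal g))

namespace HessAux

variable {n : ℕ}

/-! ### generic determinant lemmas -/

section DetLemmas

variable {R : Type*} [CommRing R] {k : ℕ}

lemma det_sub_det_mem (I : Ideal R) (M M' : Matrix (Fin k) (Fin k) R)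
    (h : ∀ s t, M s t - M' s t ∈ I) : M.det - M'.det ∈ I := by
  have hmk : (Ideal.Quotient.mk I).mapMatrix M = (Ideal.Quotient.mk I).mapMatrix M' := by
    ext s t
    simp only [RingHom.mapMatrix_apply, Matrix.map_apply]
    rw [Ideal.Quotient.mk_eq_mk_iff_sub_mem]
    exact h s t
  have := congrArg Matrix.det hmk
  rw [← RingHom.map_det, ← RingHom.map_det] at this
  rwa [← Ideal.Quotient.mk_eq_mk_iff_sub_mem]

lemma row_expand (v : Fin n → Fin k → R) (a : Fin n → Fin k → R) :
    Matrix.det (Matrix.of fun s t : Fin k => ∑ i, a i s * v i t)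
      = ∑ r : Fin k → Fin n, (∏ s, a (r s) s) • Matrix.det (Matrix.of fun s t => v (r s) t) := by
  classical
  have e0 : Matrix.det (Matrix.of fun s t : Fin k => ∑ i, a i s * v i t)
      = (Matrix.detRowAlternating (R := R) (n := Fin k)).toMultilinearMap
          (fun s => ∑ i : Fin n, a i s • v i) := by
    congr 1
    funext s
    funext t
    simp only [Matrix.of_apply, Finset.sum_apply, Pi.smul_apply, smul_eq_mul]
  rw [e0, MultilinearMap.map_sum]
  refine Finset.sum_congr rfl fun r _ => ?_
  rw [show (fun s => a (r s) s • v (r s)) = fun s => (fun s' => a (r s') s') s • v (r s) from rfl]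
  rw [MultilinearMap.map_smul_univ]
  rfl

lemma det_sandwich_mem (M : Matrix (Fin n) (Fin n) R) (A B : Matrix (Fin n) (Fin k) R) :
    Matrix.det (Matrix.of fun s t : Fin k => ∑ i, ∑ j, A i s * (M i j * B j t))
      ∈ minorsIdeal M k := by
  classical
  have inner : ∀ r : Fin k → Fin n,
      Matrix.det (Matrix.of fun s t : Fin k => ∑ j, M (r s) j * B j t) ∈ minorsIdeal M k := by
    intro r
    have htrans : Matrix.det (Matrix.of fun s t : Fin k => ∑ j, M (r s) j * B j t)
        = Matrix.det (Matrix.of fun t s : Fin k => ∑ j, B j t * M (r s) j) := by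
      rw [← Matrix.det_transpose]
      congr 1
      ext t s
      simp only [Matrix.transpose_apply, Matrix.of_apply]
      exact Finset.sum_congr rfl fun j _ => mul_comm _ _
    rw [htrans, row_expand (fun j s => M (r s) j) (fun j t => B j t)]
    apply Ideal.sum_mem
    intro c _
    rw [smul_eq_mul]
    apply Ideal.mul_mem_left
    have : Matrix.det (Matrix.of fun t s : Fin k => M (r s) (c t))
        = Matrix.det (M.submatrix r c) := by
      rw [← Matrix.det_transpose (M.submatrix r c)]
      rfl
    rw [this]
    exact Ideal.subset_span ⟨r, c, rfl⟩
  have houter : Matrix.det (Matrix.of fun s t : Fin k => ∑ i, ∑ j, A i s * (M i j * B j t))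
      = ∑ r : Fin k → Fin n, (∏ s, A (r s) s) •
          Matrix.det (Matrix.of fun s t : Fin k => ∑ j, M (r s) j * B j t) := by
    have := row_expand (fun i t => ∑ j, M i j * B j t) (fun i s => A i s)
    rw [← this]
    congr 1
    ext s t
    simp only [Matrix.of_apply]
    rw [← Finset.sum_congr rfl fun i (_ : i ∈ Finset.univ) =>
      Finset.mul_sum Finset.univ (fun j => M i j * B j t) (A i s)]
  rw [houter]
  apply Ideal.sum_mem
  intro r _
  rw [smul_eq_mul]
  exact Ideal.mul_mem_left _ _ (inner r)

end DetLemmas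

/-! ### `pd` is a derivation -/

lemma pd_coeff (i : Fin n) (f : MvPowerSeries (Fin n) ℂ) (m : Fin n →₀ ℕ) :
    MvPowerSeries.coeff m (pd i f)
      = ((m i : ℂ) + 1) * MvPowerSeries.coeff (m + Finsupp.single i 1) f := rfl

lemma pd_add (i : Fin n) (f g : MvPowerSeries (Fin n) ℂ) :
    pd i (f + g) = pd i f + pd i g := by
  ext m
  simp [pd_coeff, map_add]
  ring

lemma pd_smul (i : Fin n) (c : ℂ) (f : MvPowerSeries (Fin n) ℂ) :
    pd i (c • f) = c • pd i f := by
  ext m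
  simp [pd_coeff]
  ring

lemma pd_one (i : Fin n) : pd i (1 : MvPowerSeries (Fin n) ℂ) = 0 := by
  ext m
  rw [pd_coeff]
  have : (m + Finsupp.single i 1) ≠ 0 := by
    intro h
    have := DFunLike.congr_fun h i
    simp at this
  simp [MvPowerSeries.coeff_one, this]

lemma key_reindex (m : Fin n →₀ ℕ) (i : Fin n) (F : (Fin n →₀ ℕ) → (Fin n →₀ ℕ) → ℂ) :
    ∑ p ∈ Finset.HasAntidiagonal.antidiagonal (m + Finsupp.single i 1),
        (fun p : (Fin n →₀ ℕ) × (Fin n →₀ ℕ) => (p.1 i : ℂ) * F p.1 p.2) p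
      = ∑ p ∈ Finset.HasAntidiagonal.antidiagonal m,
        (fun p : (Fin n →₀ ℕ) × (Fin n →₀ ℕ) =>
          ((p.1 i : ℂ) + 1) * F (p.1 + Finsupp.single i 1) p.2) p := by
  rw [← Finset.sum_filter_of_ne (p := fun p : (Fin n →₀ ℕ) × (Fin n →₀ ℕ) => p.1 i ≠ 0)
    (by intro p _ h h0; apply h; simp only [h0]; push_cast; ring)]
  refine Finset.sum_bij' (i := fun p _ => (p.1 - Finsupp.single i 1, p.2))
    (j := fun q _ => (q.1 + Finsupp.single i 1, q.2)) ?_ ?_ ?_ ?_ ?_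
  · intro p hp
    simp only [Finset.mem_filter, Finset.HasAntidiagonal.mem_antidiagonal] at hp
    obtain ⟨h1, h2⟩ := hp
    have hle : Finsupp.single i 1 ≤ p.1 := by
      rw [Finsupp.single_le_iff]; omega
    rw [Finset.HasAntidiagonal.mem_antidiagonal]
    have hc : p.1 - Finsupp.single i 1 + Finsupp.single i 1 = p.1 := tsub_add_cancel_of_le hle
    have h3 : p.1 - Finsupp.single i 1 + Finsupp.single i 1 + p.2 = m + Finsupp.single i 1 := by
      rw [hc, h1]
    rw [add_right_comm] at h3
    exact add_right_cancel h3
  · intro q hq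
    rw [Finset.HasAntidiagonal.mem_antidiagonal] at hq
    simp only [Finset.mem_filter, Finset.HasAntidiagonal.mem_antidiagonal]
    refine ⟨by rw [add_right_comm, hq], by simp⟩
  · intro p hp
    simp only [Finset.mem_filter, Finset.HasAntidiagonal.mem_antidiagonal] at hp
    have hle : Finsupp.single i 1 ≤ p.1 := by
      rw [Finsupp.single_le_iff]; omega
    have hc : p.1 - Finsupp.single i 1 + Finsupp.single i 1 = p.1 := tsub_add_cancel_of_le hle
    simp [hc]
  · intro q hq
    simp
  · intro p hp
    simp only [Finset.mem_filter, Finset.HasAntidiagonal.mem_antidiagonal] at hp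
    have h2 : 1 ≤ p.1 i := by omega
    have hle : Finsupp.single i 1 ≤ p.1 := by
      rw [Finsupp.single_le_iff]; omega
    have hc : p.1 - Finsupp.single i 1 + Finsupp.single i 1 = p.1 := tsub_add_cancel_of_le hle
    simp only [hc]
    congr 1
    rw [Finsupp.tsub_apply, Finsupp.single_apply, if_pos rfl]
    push_cast [Nat.cast_sub h2]
    ring

lemma sum_swap_anti (m : Fin n →₀ ℕ) (G : (Fin n →₀ ℕ) → (Fin n →₀ ℕ) → ℂ) :
    ∑ p ∈ Finset.HasAntidiagonal.antidiagonal m,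
      (fun p : (Fin n →₀ ℕ) × (Fin n →₀ ℕ) => G p.1 p.2) p
    = ∑ p ∈ Finset.HasAntidiagonal.antidiagonal m,
      (fun p : (Fin n →₀ ℕ) × (Fin n →₀ ℕ) => G p.2 p.1) p := by
  rw [← Finset.HasAntidiagonal.map_swap_antidiagonal, Finset.sum_map]
  simp

lemma pd_mul (i : Fin n) (f g : MvPowerSeries (Fin n) ℂ) :
    pd i (f * g) = f * pd i g + g * pd i f := by
  classical
  ext m
  rw [map_add, pd_coeff, MvPowerSeries.coeff_mul, MvPowerSeries.coeff_mul,
    MvPowerSeries.coeff_mul]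
  have key1 := key_reindex m i (fun a b => MvPowerSeries.coeff a f * MvPowerSeries.coeff b g)
  have key2 := key_reindex m i (fun a b => MvPowerSeries.coeff b f * MvPowerSeries.coeff a g)
  have swap1 := sum_swap_anti (m + Finsupp.single i 1)
    (fun a b => (b i : ℂ) * (MvPowerSeries.coeff a f * MvPowerSeries.coeff b g))
  have swap2 := sum_swap_anti m
    (fun a b => MvPowerSeries.coeff a f *
      (((b i : ℂ) + 1) * MvPowerSeries.coeff (b + Finsupp.single i 1) g))
  have swap3 := sum_swap_anti m
    (fun a b => MvPowerSeries.coeff a g *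
      (((b i : ℂ) + 1) * MvPowerSeries.coeff (b + Finsupp.single i 1) f))
  have split : ((m i : ℂ) + 1) *
      ∑ p ∈ Finset.HasAntidiagonal.antidiagonal (m + Finsupp.single i 1),
        MvPowerSeries.coeff p.1 f * MvPowerSeries.coeff p.2 g
      = (∑ p ∈ Finset.HasAntidiagonal.antidiagonal (m + Finsupp.single i 1),
          (fun p : (Fin n →₀ ℕ) × (Fin n →₀ ℕ) =>
            (p.1 i : ℂ) * (MvPowerSeries.coeff p.1 f * MvPowerSeries.coeff p.2 g)) p)
        + ∑ p ∈ Finset.HasAntidiagonal.antidiagonal (m + Finsupp.single i 1),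
          (fun p : (Fin n →₀ ℕ) × (Fin n →₀ ℕ) =>
            (p.2 i : ℂ) * (MvPowerSeries.coeff p.1 f * MvPowerSeries.coeff p.2 g)) p := by
    rw [Finset.mul_sum, ← Finset.sum_add_distrib]
    refine Finset.sum_congr rfl ?_
    intro p hp
    rw [Finset.HasAntidiagonal.mem_antidiagonal] at hp
    have h1 : p.1 i + p.2 i = m i + 1 := by
      have := DFunLike.congr_fun hp i
      simpa using this
    have hc : ((m i : ℂ) + 1) = (p.1 i : ℂ) + (p.2 i : ℂ) := by
      exact_mod_cast h1.symm
    simp only [hc]; ring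
  rw [split, key1, swap1, key2]
  rw [show (∑ p ∈ Finset.HasAntidiagonal.antidiagonal m,
      MvPowerSeries.coeff p.1 f * MvPowerSeries.coeff p.2 (pd i g))
    = ∑ p ∈ Finset.HasAntidiagonal.antidiagonal m,
      (fun p : (Fin n →₀ ℕ) × (Fin n →₀ ℕ) =>
        MvPowerSeries.coeff p.1 f *
          (((p.2 i : ℂ) + 1) * MvPowerSeries.coeff (p.2 + Finsupp.single i 1) g)) p from rfl]
  rw [show (∑ p ∈ Finset.HasAntidiagonal.antidiagonal m,
      MvPowerSeries.coeff p.1 g * MvPowerSeries.coeff p.2 (pd i f))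
    = ∑ p ∈ Finset.HasAntidiagonal.antidiagonal m,
      (fun p : (Fin n →₀ ℕ) × (Fin n →₀ ℕ) =>
        MvPowerSeries.coeff p.1 g *
          (((p.2 i : ℂ) + 1) * MvPowerSeries.coeff (p.2 + Finsupp.single i 1) f)) p from rfl]
  rw [swap2, swap3, add_comm
    (∑ p ∈ Finset.HasAntidiagonal.antidiagonal m,
      (fun p : (Fin n →₀ ℕ) × (Fin n →₀ ℕ) =>
        ((p.1 i : ℂ) + 1) * (MvPowerSeries.coeff (p.1 + Finsupp.single i 1) f
          * MvPowerSeries.coeff p.2 g)) p)]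
  congr 1
  · refine Finset.sum_congr rfl fun p _ => by ring
  · refine Finset.sum_congr rfl fun p _ => by ring

noncomputable def pdD (i : Fin n) :
    Derivation ℂ (MvPowerSeries (Fin n) ℂ) (MvPowerSeries (Fin n) ℂ) where
  toFun := pd i
  map_add' := pd_add i
  map_smul' := fun c f => pd_smul i c f
  map_one_eq_zero' := pd_one i
  leibniz' := fun a b => by
    simp only [LinearMap.coe_mk, AddHom.coe_mk, smul_eq_mul]
    rw [pd_mul]

@[simp] lemma pdD_apply (i : Fin n) (f : MvPowerSeries (Fin n) ℂ) : pdD i f = pd i f := rfl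

end HessAux

namespace HessAux

variable {n : ℕ}

/-! ### every derivation is determined by its values on the variables -/

noncomputable def mX (n : ℕ) : Ideal (MvPowerSeries (Fin n) ℂ) :=
  Ideal.span (Set.range (X : Fin n → MvPowerSeries (Fin n) ℂ))

lemma degree_add' (a b : Fin n →₀ ℕ) : (a + b).degree = a.degree + b.degree := by
  simp only [Finsupp.degree_eq_weight_one, map_add]

lemma degree_single_one (i : Fin n) : (Finsupp.single i 1).degree = 1 := by
  exact Finsupp.degree_single i 1

lemma mX_le_ker : mX n ≤ RingHom.ker (MvPowerSeries.constantCoeff) := by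
  rw [mX, Ideal.span_le]
  rintro x ⟨i, rfl⟩
  simp [RingHom.mem_ker]

lemma mem_mX_pow {N : ℕ} {h : MvPowerSeries (Fin n) ℂ}
    (hh : ∀ m : Fin n →₀ ℕ, m.degree < N → MvPowerSeries.coeff m h = 0) :
    h ∈ mX n ^ N := by
  classical
  induction N generalizing h with
  | zero => simp
  | succ N ih =>
    set hc : Fin n → MvPowerSeries (Fin n) ℂ := fun i =>
      fun m => if ∀ j, j < i → m j = 0 then h (m + Finsupp.single i 1) else 0 with hhc
    have hc_coeff : ∀ (i : Fin n) (m : Fin n →₀ ℕ), MvPowerSeries.coeff m (hc i)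
        = if ∀ j, j < i → m j = 0 then MvPowerSeries.coeff (m + Finsupp.single i 1) h
          else 0 := fun i m => rfl
    have hsplit : h = ∑ i, (X i : MvPowerSeries (Fin n) ℂ) * hc i := by
      ext m'
      rw [map_sum]
      by_cases hm0 : m' = 0
      · subst hm0
        rw [hh 0 (by simp)]
        refine (Finset.sum_eq_zero ?_).symm
        intro i _
        rw [MvPowerSeries.X, MvPowerSeries.coeff_monomial_mul]
        rw [if_neg]
        intro hle
        have := hle i
        simp [Finsupp.single_le_iff] at this
      · have hne : m'.support.Nonempty := Finsupp.support_nonempty_iff.mpr hm0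
        set i0 := m'.support.min' hne with hi0
        have hi0mem : i0 ∈ m'.support := m'.support.min'_mem hne
        have hi0ne : m' i0 ≠ 0 := Finsupp.mem_support_iff.mp hi0mem
        rw [Finset.sum_eq_single i0]
        · rw [MvPowerSeries.X, MvPowerSeries.coeff_monomial_mul, if_pos (by
            rw [Finsupp.single_le_iff]; omega)]
          rw [one_mul]
          have harg : (m' - Finsupp.single i0 1) + Finsupp.single i0 1 = m' :=
            tsub_add_cancel_of_le (by rw [Finsupp.single_le_iff]; omega)
          rw [hc_coeff, if_pos, harg]
          intro j hj
          rw [Finsupp.tsub_apply]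
          have : j ∉ m'.support := fun hmem => absurd (m'.support.min'_le j hmem) (by
            rw [← hi0] at *; omega)
          have := Finsupp.notMem_support_iff.mp this
          simp [this]
        · intro i _ hne2
          rw [MvPowerSeries.X, MvPowerSeries.coeff_monomial_mul]
          by_cases hle : Finsupp.single i 1 ≤ m'
          · rw [if_pos hle, one_mul]
            have hi_supp : i ∈ m'.support := by
              rw [Finsupp.mem_support_iff]
              have := hle
              rw [Finsupp.single_le_iff] at this
              omega
            have hlt : i0 < i := lt_of_le_of_ne (m'.support.min'_le i hi_supp) (Ne.symm ?_)
            · rw [hc_coeff, if_neg]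
              intro hall
              have := hall i0 hlt
              rw [Finsupp.tsub_apply, Finsupp.single_apply, if_neg (by omega)] at this
              omega
            · exact hne2
          · rw [if_neg hle]
        · intro habs
          exact absurd (Finset.mem_univ i0) habs
    rw [hsplit]
    apply Ideal.sum_mem
    intro i _
    have hXi : (X i : MvPowerSeries (Fin n) ℂ) ∈ mX n := Ideal.subset_span ⟨i, rfl⟩
    have hhi : hc i ∈ mX n ^ N := by
      apply ih
      intro m hm
      rw [hc_coeff]
      split
      · apply hh
        rw [degree_add', degree_single_one]
        omega
      · rfl
    have := Submodule.mul_mem_mul hXi hhi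
    rwa [show mX n * mX n ^ N = mX n ^ (N + 1) by rw [pow_succ, mul_comm]] at this

lemma coeff_zero_of_mem_mX_pow {N : ℕ} {h : MvPowerSeries (Fin n) ℂ}
    (hh : h ∈ mX n ^ N) :
    ∀ m : Fin n →₀ ℕ, m.degree < N → MvPowerSeries.coeff m h = 0 := by
  classical
  induction N generalizing h with
  | zero => intro m hm; omega
  | succ N ih =>
    rw [pow_succ, mul_comm] at hh
    induction hh using Submodule.mul_induction_on' with
    | mem_mul_mem x hx y hy =>
      intro m hm
      rw [MvPowerSeries.coeff_mul]
      refine Finset.sum_eq_zero ?_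
      rintro ⟨a, b⟩ hab
      rw [Finset.HasAntidiagonal.mem_antidiagonal] at hab
      by_cases ha : a = 0
      · have : MvPowerSeries.constantCoeff x = 0 := mX_le_ker hx
        subst ha
        simp only [MvPowerSeries.coeff_zero_eq_constantCoeff]
        rw [this, zero_mul]
      · have had : 1 ≤ a.degree := by
          rcases Nat.eq_zero_or_pos a.degree with h0 | h1
          · exact absurd ((Finsupp.degree_eq_zero_iff a).mp h0) ha
          · omega
        have : b.degree < N := by
          have := degree_add' a b
          rw [hab] at this
          omega
        rw [ih hy b this, mul_zero]
    | add x _ y _ ihx ihy =>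
      intro m hm
      rw [map_add, ihx m hm, ihy m hm, add_zero]

lemma deriv_shift (δ : Derivation ℂ (MvPowerSeries (Fin n) ℂ) (MvPowerSeries (Fin n) ℂ))
    {N : ℕ} {h : MvPowerSeries (Fin n) ℂ} (hh : h ∈ mX n ^ (N + 1)) : δ h ∈ mX n ^ N := by
  induction N generalizing h with
  | zero => simp
  | succ N ih =>
    rw [pow_succ, mul_comm] at hh
    induction hh using Submodule.mul_induction_on' with
    | mem_mul_mem x hx y hy =>
      rw [Derivation.leibniz, smul_eq_mul, smul_eq_mul]
      apply Ideal.add_mem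
      · have := ih hy
        have h2 := Submodule.mul_mem_mul hx this
        rwa [show mX n * mX n ^ N = mX n ^ (N+1) by rw [pow_succ, mul_comm]] at h2
      · exact Ideal.mul_mem_right _ _ hy
    | add x hx y hy ihx ihy =>
      rw [map_add]
      exact Ideal.add_mem _ ihx ihy

lemma pd_X (i j : Fin n) :
    pd i (X j : MvPowerSeries (Fin n) ℂ) = if i = j then 1 else 0 := by
  classical
  ext m
  rw [pd_coeff, MvPowerSeries.coeff_X]
  by_cases hij : i = j
  · subst hij
    rw [if_pos rfl]
    by_cases hm : m = 0
    · subst hm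
      simp [MvPowerSeries.coeff_one]
    · rw [if_neg (by
        intro habs
        apply hm
        have := congrArg (· - Finsupp.single i 1) habs
        simpa using this), mul_zero]
      rw [MvPowerSeries.coeff_one, if_neg hm]
  · rw [if_neg hij]
    rw [if_neg (by
      intro habs
      have := DFunLike.congr_fun habs i
      rw [Finsupp.add_apply, Finsupp.single_apply, Finsupp.single_apply,
        if_pos rfl, if_neg (fun h => hij h.symm)] at this
      omega), mul_zero]
    simp

lemma der_sum_apply {ι : Type} (s : Finset ι)
    (d : ι → Derivation ℂ (MvPowerSeries (Fin n) ℂ) (MvPowerSeries (Fin n) ℂ))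
    (x : MvPowerSeries (Fin n) ℂ) : (∑ i ∈ s, d i) x = ∑ i ∈ s, d i x := by
  classical
  induction s using Finset.cons_induction with
  | empty => simp
  | cons a s ha ih => rw [Finset.sum_cons, Derivation.add_apply, ih, Finset.sum_cons]

lemma eps_poly (ε : Derivation ℂ (MvPowerSeries (Fin n) ℂ) (MvPowerSeries (Fin n) ℂ))
    (hX : ∀ i, ε (X i) = 0) (q : MvPolynomial (Fin n) ℂ) :
    ε (q : MvPowerSeries (Fin n) ℂ) = 0 := by
  induction q using MvPolynomial.induction_on with
  | C c =>
    rw [MvPolynomial.coe_C, MvPowerSeries.c_eq_algebraMap]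
    exact Derivation.map_algebraMap ε c
  | add p q hp hq => rw [MvPolynomial.coe_add, map_add, hp, hq, add_zero]
  | mul_X p i hp =>
    rw [MvPolynomial.coe_mul, MvPolynomial.coe_X, Derivation.leibniz, hp, hX i,
      smul_zero, smul_zero, add_zero]

theorem derivation_determined
    (δ : Derivation ℂ (MvPowerSeries (Fin n) ℂ) (MvPowerSeries (Fin n) ℂ))
    (f : MvPowerSeries (Fin n) ℂ) :
    δ f = ∑ i, pd i f * δ (X i) := by
  classical
  set ε : Derivation ℂ (MvPowerSeries (Fin n) ℂ) (MvPowerSeries (Fin n) ℂ) :=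
    δ - ∑ i, δ (X i) • pdD i with hε
  have hεX : ∀ j, ε (X j) = 0 := by
    intro j
    rw [hε, Derivation.sub_apply, der_sum_apply, sub_eq_zero]
    simp only [Derivation.smul_apply, smul_eq_mul]
    rw [Finset.sum_eq_single j]
    · rw [pdD_apply, pd_X, if_pos rfl, mul_one]
    · intro i _ hne
      rw [pdD_apply, pd_X, if_neg hne, mul_zero]
    · intro h; exact absurd (Finset.mem_univ j) h
  have hzero : ∀ h, ε h = 0 := by
    intro h
    ext m
    set N := m.degree + 1 with hN
    set D : Finset (Fin n →₀ ℕ) := (Finsupp.finite_of_degree_le (σ := Fin n) N).toFinset with hD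
    set q : MvPolynomial (Fin n) ℂ :=
      ∑ d ∈ D, MvPolynomial.monomial d (MvPowerSeries.coeff d h) with hq
    have hcoeffq : ∀ d : Fin n →₀ ℕ, d.degree ≤ N →
        MvPowerSeries.coeff d (q : MvPowerSeries (Fin n) ℂ)
          = MvPowerSeries.coeff d h := by
      intro d hd
      rw [MvPolynomial.coeff_coe, hq]
      rw [MvPolynomial.coeff_sum]
      rw [Finset.sum_eq_single d]
      · rw [MvPolynomial.coeff_monomial, if_pos rfl]
      · intro d' _ hne
        rw [MvPolynomial.coeff_monomial, if_neg hne]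
      · intro habs
        refine absurd ?_ habs
        rw [hD, Set.Finite.mem_toFinset]
        exact hd
    have hrem : h - (q : MvPowerSeries (Fin n) ℂ) ∈ mX n ^ (N + 1) := by
      apply mem_mX_pow
      intro d hd
      rw [map_sub, hcoeffq d (by omega), sub_self]
    have h1 : ε ((q : MvPowerSeries (Fin n) ℂ)) = 0 := eps_poly ε hεX q
    have h2 : ε (h - (q : MvPowerSeries (Fin n) ℂ)) ∈ mX n ^ N := deriv_shift ε hrem
    have h3 : MvPowerSeries.coeff m (ε (h - (q : MvPowerSeries (Fin n) ℂ))) = 0 :=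
      coeff_zero_of_mem_mX_pow h2 m (by omega)
    have hsum : h = (q : MvPowerSeries (Fin n) ℂ) + (h - (q : MvPowerSeries (Fin n) ℂ)) := by
      ring
    rw [hsum, map_add, map_add, h1, h3, map_zero]
    simp
  have := hzero f
  rw [hε, Derivation.sub_apply, der_sum_apply, sub_eq_zero] at this
  simp only [Derivation.smul_apply, smul_eq_mul] at this
  rw [this]
  refine Finset.sum_congr rfl fun i _ => ?_
  rw [pdD_apply, mul_comm]

end HessAux

namespace HessAux

variable {n : ℕ}

/-! ### the derivation-theoretic description of the Hessian ideal -/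

def derSet (g : MvPowerSeries (Fin n) ℂ) : Set (MvPowerSeries (Fin n) ℂ) :=
  Set.range fun δ : Derivation ℂ (MvPowerSeries (Fin n) ℂ) (MvPowerSeries (Fin n) ℂ) => δ g

def minorSet (g : MvPowerSeries (Fin n) ℂ) (k : ℕ) : Set (MvPowerSeries (Fin n) ℂ) :=
  {x | ∃ δ δ' : Fin k → Derivation ℂ (MvPowerSeries (Fin n) ℂ) (MvPowerSeries (Fin n) ℂ),
    x = Matrix.det (Matrix.of fun s t => δ s (δ' t g))}

noncomputable def TI (g : MvPowerSeries (Fin n) ℂ) : Ideal (MvPowerSeries (Fin n) ℂ) :=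
  Ideal.span ({g} ∪ derSet g)

noncomputable def KI (g : MvPowerSeries (Fin n) ℂ) (k : ℕ) : Ideal (MvPowerSeries (Fin n) ℂ) :=
  TI g ⊔ Ideal.span (minorSet g k)

lemma self_mem_TI (g : MvPowerSeries (Fin n) ℂ) : g ∈ TI g :=
  Ideal.subset_span (Or.inl rfl)

lemma der_mem_TI (g : MvPowerSeries (Fin n) ℂ)
    (δ : Derivation ℂ (MvPowerSeries (Fin n) ℂ) (MvPowerSeries (Fin n) ℂ)) : δ g ∈ TI g :=
  Ideal.subset_span (Or.inr ⟨δ, rfl⟩)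

lemma TI_eq (g : MvPowerSeries (Fin n) ℂ) :
    TI g = Ideal.span {g} ⊔ jacobianIdeal g := by
  apply le_antisymm
  · rw [TI, Ideal.span_le]
    rintro x (rfl | ⟨δ, rfl⟩)
    · exact Ideal.mem_sup_left (Ideal.subset_span rfl)
    · show δ g ∈ Ideal.span {g} ⊔ jacobianIdeal g
      rw [derivation_determined δ g]
      apply Ideal.sum_mem
      intro i _
      exact Ideal.mem_sup_right (Ideal.mul_mem_right _ _ (Ideal.subset_span ⟨i, rfl⟩))
  · apply sup_le
    · rw [Ideal.span_le]
      rintro x rfl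
      exact self_mem_TI _
    · rw [jacobianIdeal, Ideal.span_le]
      rintro x ⟨i, rfl⟩
      have := der_mem_TI g (pdD i)
      rwa [pdD_apply] at this

lemma minors_le_KI (g : MvPowerSeries (Fin n) ℂ) (k : ℕ) :
    minorsIdeal (hessianMatrix g) k ≤ KI g k := by
  rw [minorsIdeal, Ideal.span_le]
  rintro x ⟨r, c, rfl⟩
  exact Ideal.mem_sup_right
    (Ideal.subset_span ⟨fun s => pdD (r s), fun t => pdD (c t), by congr 1⟩)

lemma minorSet_mem_hess (g : MvPowerSeries (Fin n) ℂ) (k : ℕ)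
    (x : MvPowerSeries (Fin n) ℂ) (hx : x ∈ minorSet g k) :
    x ∈ hessianAlgIdeal g k := by
  obtain ⟨δ, δ', rfl⟩ := hx
  have hJ : jacobianIdeal g ≤ hessianAlgIdeal g k := le_trans le_sup_right le_sup_left
  have hminors : minorsIdeal (hessianMatrix g) k ≤ hessianAlgIdeal g k := le_sup_right
  set M' : Matrix (Fin k) (Fin k) (MvPowerSeries (Fin n) ℂ) :=
    Matrix.of fun s t => ∑ i, ∑ j, (δ s (X i)) * (pd i (pd j g) * (δ' t (X j))) with hM'
  have hdiff : ∀ s t, (Matrix.of fun s t => δ s (δ' t g)) s t - M' s t ∈ jacobianIdeal g := by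
    intro s t
    have e1 : δ' t g = ∑ j, pd j g * δ' t (X j) := derivation_determined _ _
    have e2 : δ s (δ' t g)
        = ∑ j, (pd j g * δ s (δ' t (X j)) + δ' t (X j) * δ s (pd j g)) := by
      rw [e1, map_sum]
      refine Finset.sum_congr rfl fun j _ => ?_
      rw [Derivation.leibniz, smul_eq_mul, smul_eq_mul]
    have e3 : ∀ j, δ s (pd j g) = ∑ i, pd i (pd j g) * δ s (X i) :=
      fun j => derivation_determined _ _
    have e4 : (Matrix.of fun s t => δ s (δ' t g)) s t - M' s t
        = ∑ j, pd j g * δ s (δ' t (X j)) := by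
      simp only [Matrix.of_apply, hM', e2]
      have hterm : ∀ j, pd j g * δ s (δ' t (X j)) + δ' t (X j) * δ s (pd j g)
          = pd j g * δ s (δ' t (X j)) + ∑ i, δ s (X i) * (pd i (pd j g) * δ' t (X j)) := by
        intro j
        congr 1
        rw [e3 j, Finset.mul_sum]
        exact Finset.sum_congr rfl fun i _ => by ring
      rw [Finset.sum_congr rfl fun j _ => hterm j, Finset.sum_add_distrib,
        Finset.sum_comm (s := (Finset.univ : Finset (Fin n)))
          (t := (Finset.univ : Finset (Fin n)))
          (f := fun j i => (δ s (X i)) * (pd i (pd j g) * (δ' t (X j))))]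
      ring
    rw [e4]
    apply Ideal.sum_mem
    intro j _
    exact Ideal.mul_mem_right _ _ (Ideal.subset_span ⟨j, rfl⟩)
  have hdet : (Matrix.of fun s t => δ s (δ' t g)).det - M'.det ∈ jacobianIdeal g :=
    det_sub_det_mem _ _ _ hdiff
  have hM'det : M'.det ∈ minorsIdeal (hessianMatrix g) k := by
    have h := det_sandwich_mem (hessianMatrix g)
      (Matrix.of fun i s => δ s (X i)) (Matrix.of fun j t => δ' t (X j))
    have : M' = Matrix.of fun s t : Fin k =>
        ∑ i, ∑ j, (Matrix.of fun i s => δ s (X i)) i s *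
          (hessianMatrix g i j * (Matrix.of fun j t => δ' t (X j)) j t) := by
      ext s t
      simp [hM', hessianMatrix]
    rw [this]
    exact h
  have hfinal : (Matrix.of fun s t => δ s (δ' t g)).det
      = ((Matrix.of fun s t => δ s (δ' t g)).det - M'.det) + M'.det := by ring
  rw [hfinal]
  exact Ideal.add_mem _ (hJ hdet) (hminors hM'det)

lemma KI_eq (g : MvPowerSeries (Fin n) ℂ) (k : ℕ) : KI g k = hessianAlgIdeal g k := by
  apply le_antisymm
  · apply sup_le
    · rw [TI_eq]
      exact le_sup_left
    · rw [Ideal.span_le]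
      intro x hx
      exact minorSet_mem_hess g k x hx
  · rw [hessianAlgIdeal]
    apply sup_le
    · rw [← TI_eq]
      exact le_sup_left
    · exact minors_le_KI g k

/-! ### conjugation of derivations by an algebra automorphism -/

noncomputable def conjD (φ : MvPowerSeries (Fin n) ℂ ≃ₐ[ℂ] MvPowerSeries (Fin n) ℂ)
    (δ : Derivation ℂ (MvPowerSeries (Fin n) ℂ) (MvPowerSeries (Fin n) ℂ)) :
    Derivation ℂ (MvPowerSeries (Fin n) ℂ) (MvPowerSeries (Fin n) ℂ) where
  toLinearMap := φ.toLinearMap ∘ₗ (δ : MvPowerSeries (Fin n) ℂ →ₗ[ℂ] MvPowerSeries (Fin n) ℂ)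
    ∘ₗ φ.symm.toLinearMap
  map_one_eq_zero' := by
    simp only [LinearMap.coe_comp, Function.comp_apply, AlgEquiv.toLinearMap_apply,
      Derivation.coeFn_coe, map_one, Derivation.map_one_eq_zero, map_zero]
  leibniz' := fun a b => by
    simp only [LinearMap.coe_comp, Function.comp_apply, AlgEquiv.toLinearMap_apply,
      Derivation.coeFn_coe, map_mul, Derivation.leibniz, smul_eq_mul, map_add,
      AlgEquiv.apply_symm_apply]

lemma conjD_apply (φ : MvPowerSeries (Fin n) ℂ ≃ₐ[ℂ] MvPowerSeries (Fin n) ℂ)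
    (δ : Derivation ℂ (MvPowerSeries (Fin n) ℂ) (MvPowerSeries (Fin n) ℂ))
    (x : MvPowerSeries (Fin n) ℂ) : conjD φ δ x = φ (δ (φ.symm x)) := rfl

lemma map_KI (φ : MvPowerSeries (Fin n) ℂ ≃ₐ[ℂ] MvPowerSeries (Fin n) ℂ)
    (g : MvPowerSeries (Fin n) ℂ) (k : ℕ) :
    Ideal.map (φ : MvPowerSeries (Fin n) ℂ →+* MvPowerSeries (Fin n) ℂ) (KI g k)
      = KI (φ g) k := by
  rw [KI, KI, Ideal.map_sup, TI, TI, Ideal.map_span, Ideal.map_span]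
  have himg1 : (φ : MvPowerSeries (Fin n) ℂ →+* MvPowerSeries (Fin n) ℂ) ''
      ({g} ∪ derSet g) = {φ g} ∪ derSet (φ g) := by
    rw [Set.image_union, Set.image_singleton]
    congr 1
    ext x
    constructor
    · rintro ⟨y, ⟨δ, rfl⟩, rfl⟩
      refine ⟨conjD φ δ, ?_⟩
      show conjD φ δ (φ g) = _
      rw [conjD_apply, AlgEquiv.symm_apply_apply]
      rfl
    · rintro ⟨δ, rfl⟩
      refine ⟨conjD φ.symm δ g, ⟨conjD φ.symm δ, rfl⟩, ?_⟩
      show (φ : MvPowerSeries (Fin n) ℂ →+* MvPowerSeries (Fin n) ℂ) (conjD φ.symm δ g)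
        = δ (φ g)
      rw [conjD_apply]
      simp
  have himg2 : (φ : MvPowerSeries (Fin n) ℂ →+* MvPowerSeries (Fin n) ℂ) ''
      minorSet g k = minorSet (φ g) k := by
    ext x
    constructor
    · rintro ⟨y, ⟨δ, δ', rfl⟩, rfl⟩
      refine ⟨fun s => conjD φ (δ s), fun t => conjD φ (δ' t), ?_⟩
      rw [show ((φ : MvPowerSeries (Fin n) ℂ →+* MvPowerSeries (Fin n) ℂ)
        (Matrix.det (Matrix.of fun s t => δ s (δ' t g))))
        = Matrix.det ((φ : MvPowerSeries (Fin n) ℂ →+* MvPowerSeries (Fin n) ℂ).mapMatrix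
            (Matrix.of fun s t => δ s (δ' t g))) from RingHom.map_det _ _]
      congr 1
      ext s t
      simp [conjD_apply]
    · rintro ⟨δ, δ', rfl⟩
      refine ⟨Matrix.det (Matrix.of fun s t =>
        conjD φ.symm (δ s) ((conjD φ.symm (δ' t)) g)),
        ⟨fun s => conjD φ.symm (δ s), fun t => conjD φ.symm (δ' t), rfl⟩, ?_⟩
      rw [show ((φ : MvPowerSeries (Fin n) ℂ →+* MvPowerSeries (Fin n) ℂ)
        (Matrix.det (Matrix.of fun s t => conjD φ.symm (δ s) ((conjD φ.symm (δ' t)) g))))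
        = Matrix.det ((φ : MvPowerSeries (Fin n) ℂ →+* MvPowerSeries (Fin n) ℂ).mapMatrix
            (Matrix.of fun s t => conjD φ.symm (δ s) ((conjD φ.symm (δ' t)) g)))
          from RingHom.map_det _ _]
      congr 1
      ext s t
      simp [conjD_apply]
  rw [himg1, himg2]

/-! ### invariance under multiplication by a unit -/

lemma TI_unit_le (u : (MvPowerSeries (Fin n) ℂ)ˣ) (f : MvPowerSeries (Fin n) ℂ) :
    TI ((u : MvPowerSeries (Fin n) ℂ) * f) ≤ TI f := by
  rw [TI, Ideal.span_le]
  rintro x (rfl | ⟨δ, rfl⟩)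
  · exact Ideal.mul_mem_left _ _ (self_mem_TI f)
  · show δ ((u : MvPowerSeries (Fin n) ℂ) * f) ∈ TI f
    rw [Derivation.leibniz, smul_eq_mul, smul_eq_mul]
    exact Ideal.add_mem _ (Ideal.mul_mem_left _ _ (der_mem_TI f δ))
      (Ideal.mul_mem_right _ _ (self_mem_TI f))

lemma TI_unit (u : (MvPowerSeries (Fin n) ℂ)ˣ) (f : MvPowerSeries (Fin n) ℂ) :
    TI ((u : MvPowerSeries (Fin n) ℂ) * f) = TI f := by
  apply le_antisymm (TI_unit_le u f)
  have := TI_unit_le u⁻¹ ((u : MvPowerSeries (Fin n) ℂ) * f)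
  rwa [show ((u⁻¹ : (MvPowerSeries (Fin n) ℂ)ˣ) : MvPowerSeries (Fin n) ℂ)
      * ((u : MvPowerSeries (Fin n) ℂ) * f) = f by
    rw [← mul_assoc, Units.inv_mul, one_mul]] at this

lemma KI_unit_le (u : (MvPowerSeries (Fin n) ℂ)ˣ) (f : MvPowerSeries (Fin n) ℂ) (k : ℕ) :
    KI ((u : MvPowerSeries (Fin n) ℂ) * f) k ≤ KI f k := by
  apply sup_le
  · exact le_trans (le_of_eq (TI_unit u f)) le_sup_left
  · rw [Ideal.span_le]
    rintro x ⟨δ, δ', rfl⟩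
    show (Matrix.of fun s t => δ s (δ' t ((u : MvPowerSeries (Fin n) ℂ) * f))).det ∈ KI f k
    set M : Matrix (Fin k) (Fin k) (MvPowerSeries (Fin n) ℂ) :=
      Matrix.of fun s t => δ s (δ' t ((u : MvPowerSeries (Fin n) ℂ) * f)) with hM
    set M' : Matrix (Fin k) (Fin k) (MvPowerSeries (Fin n) ℂ) :=
      Matrix.of fun s t => (u : MvPowerSeries (Fin n) ℂ) * δ s (δ' t f) with hM'
    have hdiff : ∀ s t, M s t - M' s t ∈ TI f := by
      intro s t
      have e1 : δ' t ((u : MvPowerSeries (Fin n) ℂ) * f) = (u : MvPowerSeries (Fin n) ℂ) * δ' t f + f * δ' t (u : MvPowerSeries (Fin n) ℂ) := by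
        rw [Derivation.leibniz, smul_eq_mul, smul_eq_mul]
      have e2 : M s t - M' s t
          = δ s (u : MvPowerSeries (Fin n) ℂ) * δ' t f + (δ' t (u : MvPowerSeries (Fin n) ℂ) * δ s f + f * δ s (δ' t (u : MvPowerSeries (Fin n) ℂ))) := by
        simp only [hM, hM', Matrix.of_apply, e1, map_add, Derivation.leibniz,
          smul_eq_mul]
        ring
      rw [e2]
      refine Ideal.add_mem _ ?_ (Ideal.add_mem _ ?_ ?_)
      · exact Ideal.mul_mem_left _ _ (der_mem_TI f (δ' t))
      · exact Ideal.mul_mem_left _ _ (der_mem_TI f (δ s))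
      · exact Ideal.mul_mem_right _ _ (self_mem_TI f)
    have hdet : M.det - M'.det ∈ TI f := det_sub_det_mem _ _ _ hdiff
    have hM'det : M'.det ∈ Ideal.span (minorSet f k) := by
      have : M'.det = (∏ _s : Fin k, (↑u : MvPowerSeries (Fin n) ℂ)) *
          (Matrix.of fun s t => δ s (δ' t f)).det := by
        rw [hM']
        exact Matrix.det_mul_column (fun _ => (↑u : MvPowerSeries (Fin n) ℂ)) _
      rw [this]
      exact Ideal.mul_mem_left _ _ (Ideal.subset_span ⟨δ, δ', rfl⟩)
    have hfinal : M.det = (M.det - M'.det) + M'.det := by ring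
    rw [hfinal]
    exact Ideal.add_mem _ (Ideal.mem_sup_left hdet) (Ideal.mem_sup_right hM'det)

lemma KI_unit (u : (MvPowerSeries (Fin n) ℂ)ˣ) (f : MvPowerSeries (Fin n) ℂ) (k : ℕ) :
    KI ((u : MvPowerSeries (Fin n) ℂ) * f) k = KI f k := by
  apply le_antisymm (KI_unit_le u f k)
  have := KI_unit_le u⁻¹ ((u : MvPowerSeries (Fin n) ℂ) * f) k
  rwa [show ((u⁻¹ : (MvPowerSeries (Fin n) ℂ)ˣ) : MvPowerSeries (Fin n) ℂ)
      * ((u : MvPowerSeries (Fin n) ℂ) * f) = f by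
    rw [← mul_assoc, Units.inv_mul, one_mul]] at this

end HessAux


open HessAux

/-- If `g' = u · (g ∘ φ)` for a unit `u ∈ 𝒪_n` and a coordinate
change `φ` (encoded as a `ℂ`-algebra automorphism of `𝒪_n`), then for every
`k = 1,...,n+1` the local Hessian algebras `H_k(g')` and `H_k(g)` are isomorphic
as `ℂ`-algebras; in particular `χ_k(g) = χ_k(g')`. -/
theorem hessian_algebra_contact_invariant {n : ℕ}
    (g g' : MvPowerSeries (Fin n) ℂ)
    (h0 : constantCoeff g = 0)
    (hiso : Module.Finite ℂ
      (MvPowerSeries (Fin n) ℂ ⧸ (Ideal.span {g} ⊔ jacobianIdeal g)))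
    (u : (MvPowerSeries (Fin n) ℂ)ˣ)
    (φ : MvPowerSeries (Fin n) ℂ ≃ₐ[ℂ] MvPowerSeries (Fin n) ℂ)
    (hgg' : g' = u * φ g) :
    ∀ k, 1 ≤ k → k ≤ n + 1 →
      Nonempty ((MvPowerSeries (Fin n) ℂ ⧸ hessianAlgIdeal g' k) ≃ₐ[ℂ]
        (MvPowerSeries (Fin n) ℂ ⧸ hessianAlgIdeal g k)) ∧
      chi g k = chi g' k := by
  intro k _ _
  have key : hessianAlgIdeal g' k
      = Ideal.map (φ : MvPowerSeries (Fin n) ℂ →+* MvPowerSeries (Fin n) ℂ)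
          (hessianAlgIdeal g k) := by
    rw [← KI_eq, ← KI_eq, hgg', KI_unit u (φ g) k, ← map_KI φ g k]
  have e : (MvPowerSeries (Fin n) ℂ ⧸ hessianAlgIdeal g k) ≃ₐ[ℂ]
      (MvPowerSeries (Fin n) ℂ ⧸ hessianAlgIdeal g' k) :=
    Ideal.quotientEquivAlg (hessianAlgIdeal g k) (hessianAlgIdeal g' k) φ key
  refine ⟨⟨e.symm⟩, ?_⟩
  rw [chi, chi]
  exact LinearEquiv.finrank_eq e.toLinearEquiv
end

section
/- Let f ∈ ℂ[x_0,...,x_n] be homogeneous of degree d whose Hessian matrix, after restriction to x_0 = 1, satisfies the relations of Proposition 1: modulo the ideal generated by g = f(1,y), its partials g_1,...,g_n, the matrix Hess(f)(1,y) can be transformed by row and column operations into the matrix with first row and first column zero and lower-right n×n block equal to Hess(g). Consequently, for each k, the localization of J_f + h_k(f) at the singular point a = (1:0:...:0) equals the ideal of 𝒪_n generated by g, g_1,...,g_n, and all k×k minors of the n×n local Hessian matrix (g_{ij}). -/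
open MvPowerSeries

open MvPolynomial in
/-- The dehomogenization map `S = ℂ[x₀,...,xₙ] → 𝒪_n`, `x₀ ↦ 1`, `x_{j+1} ↦ y_j`,
realizing the analytic localization at the point `a = (1:0:...:0)`. -/
noncomputable def localize (n : ℕ) :
    MvPolynomial (Fin (n + 1)) ℂ →ₐ[ℂ] MvPowerSeries (Fin n) ℂ :=
  aeval (Fin.cases 1 fun j => MvPowerSeries.X j)

/-! ### Auxiliary lemmas -/

section Aux

open MvPolynomial

lemma pd_add {n : ℕ} (i : Fin n) (a b : MvPowerSeries (Fin n) ℂ) :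
    pd i (a + b) = pd i a + pd i b := by
  funext m
  show _ * (a _ + b _) = _ * _ + _ * _
  ring

lemma coeff_monomial' {n : ℕ} (e m : Fin n →₀ ℕ) (c : ℂ) :
    (MvPowerSeries.monomial (R := ℂ) e c) m = if m = e then c else 0 := by
  have := MvPowerSeries.coeff_monomial (R := ℂ) m e c
  simpa [MvPowerSeries.coeff_apply] using this

lemma pd_monomial {n : ℕ} (i : Fin n) (e : Fin n →₀ ℕ) (c : ℂ) :
    pd i (MvPowerSeries.monomial (R := ℂ) e c)
      = MvPowerSeries.monomial (R := ℂ) (e - Finsupp.single i 1) ((e i : ℂ) * c) := by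
  funext m
  show ((m i : ℂ) + 1) * (MvPowerSeries.monomial (R := ℂ) e c) (m + Finsupp.single i 1) = _
  rw [coeff_monomial', coeff_monomial']
  by_cases h0 : e i = 0
  · have h1 : m + Finsupp.single i 1 ≠ e := by
      intro h
      have := DFunLike.congr_fun h i
      simp [h0] at this
    rw [if_neg h1, h0]
    simp
  · by_cases h2 : m + Finsupp.single i 1 = e
    · have hm : m = e - Finsupp.single i 1 := by
        rw [← h2]; ext j; by_cases hj : j = i <;> simp [hj, Finsupp.single_apply]
      have hmi : (m i : ℂ) + 1 = (e i : ℂ) := by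
        have := DFunLike.congr_fun h2 i
        simp at this
        rw [← this]; push_cast; ring
      rw [if_pos hm, if_pos h2, hmi]
    · have hm : m ≠ e - Finsupp.single i 1 := by
        intro h
        apply h2
        rw [h]; ext j; by_cases hj : j = i
        · subst hj; simp [Finsupp.single_apply]; omega
        · simp [hj, Finsupp.single_apply, Ne.symm hj]
      rw [if_neg hm, if_neg h2, mul_zero]

lemma pd_coe {n : ℕ} (i : Fin n) (q : MvPolynomial (Fin n) ℂ) :
    pd i (q : MvPowerSeries (Fin n) ℂ)
      = ((MvPolynomial.pderiv i q : MvPolynomial (Fin n) ℂ) : MvPowerSeries (Fin n) ℂ) := by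
  induction q using MvPolynomial.induction_on' with
  | monomial e c =>
      rw [MvPolynomial.coe_monomial, pd_monomial, MvPolynomial.pderiv_monomial,
        MvPolynomial.coe_monomial, mul_comm]
  | add p q hp hq =>
      rw [MvPolynomial.coe_add, pd_add, hp, hq, map_add, MvPolynomial.coe_add]

lemma pderiv_comm' {σ : Type*} [DecidableEq σ] {R : Type*} [CommSemiring R] (i j : σ)
    (p : MvPolynomial σ R) :
    pderiv i (pderiv j p) = pderiv j (pderiv i p) := by
  induction p using MvPolynomial.induction_on' with
  | add p q hp hq => simp [map_add, hp, hq]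
  | monomial e c =>
      rcases eq_or_ne i j with rfl | hij
      · rfl
      · rw [pderiv_monomial, pderiv_monomial, pderiv_monomial, pderiv_monomial]
        have h1 := Finsupp.tsub_apply e (Finsupp.single j 1) i
        rw [Finsupp.single_apply, if_neg (Ne.symm hij), Nat.sub_zero] at h1
        have h2 := Finsupp.tsub_apply e (Finsupp.single i 1) j
        rw [Finsupp.single_apply, if_neg hij, Nat.sub_zero] at h2
        rw [h1, h2, tsub_right_comm]
        ring_nf

/-- Euler's identity. -/
lemma euler {n d : ℕ} {f : MvPolynomial (Fin n) ℂ} (hf : f.IsHomogeneous d) :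
    ∑ i, MvPolynomial.X i * pderiv i f = d • f := by
  have key : ∀ (m : Fin n →₀ ℕ) (c : ℂ) (i : Fin n), MvPolynomial.X i * pderiv i (MvPolynomial.monomial m c)
      = (m i) • MvPolynomial.monomial m c := by
    intro m c i
    rw [pderiv_monomial]
    by_cases h0 : m i = 0
    · simp [h0]
    · rw [MvPolynomial.X, monomial_mul, one_mul]
      have : m - Finsupp.single i 1 + Finsupp.single i 1 = m := by
        ext a
        rw [Finsupp.add_apply, Finsupp.tsub_apply, Finsupp.single_apply]
        by_cases ha : i = a
        · subst ha; simp; omega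
        · simp [ha]
      rw [add_comm, this, smul_monomial]
      congr 1
      rw [mul_comm, nsmul_eq_mul]
  calc ∑ i, MvPolynomial.X i * pderiv i f
      = ∑ i, ∑ m ∈ f.support, MvPolynomial.X i * pderiv i (MvPolynomial.monomial m (MvPolynomial.coeff m f)) := by
        refine Finset.sum_congr rfl fun i _ => ?_
        rw [← Finset.mul_sum, ← map_sum, ← f.as_sum]
    _ = ∑ m ∈ f.support, ∑ i, MvPolynomial.X i * pderiv i (MvPolynomial.monomial m (MvPolynomial.coeff m f)) := Finset.sum_comm
    _ = ∑ m ∈ f.support, d • MvPolynomial.monomial m (MvPolynomial.coeff m f) := by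
        refine Finset.sum_congr rfl fun m hm => ?_
        have hdeg : ∑ i, m i = d := by
          have h := hf (MvPolynomial.mem_support_iff.mp hm)
          rw [← h, Finsupp.weight_apply, Finsupp.sum_fintype _ _ (fun _ => rfl)]
          simp
        rw [Finset.sum_congr rfl fun i _ => key m (MvPolynomial.coeff m f) i, ← Finset.sum_smul, hdeg]
    _ = d • f := by rw [← Finset.smul_sum, ← f.as_sum]

/-- Dehomogenization at the level of polynomials. -/
noncomputable def dehom (n : ℕ) : MvPolynomial (Fin (n + 1)) ℂ →ₐ[ℂ] MvPolynomial (Fin n) ℂ :=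
  aeval (Fin.cases 1 fun j => MvPolynomial.X j)

lemma localize_eq {n : ℕ} (p : MvPolynomial (Fin (n+1)) ℂ) :
    localize n p = ((dehom n p : MvPolynomial (Fin n) ℂ) : MvPowerSeries (Fin n) ℂ) := by
  have : localize n = (MvPolynomial.coeToMvPowerSeries.algHom ℂ).comp (dehom n) := by
    apply MvPolynomial.algHom_ext
    intro i
    induction i using Fin.cases with
    | zero => simp [localize, dehom]
    | succ j => simp [localize, dehom, MvPolynomial.coeToMvPowerSeries.algHom_apply]
  rw [this]
  simp [MvPolynomial.coeToMvPowerSeries.algHom_apply]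

lemma pderiv_dehom {n : ℕ} (j : Fin n) (p : MvPolynomial (Fin (n+1)) ℂ) :
    pderiv j (dehom n p) = dehom n (pderiv (Fin.succ j) p) := by
  have hX : ∀ i : Fin (n+1), pderiv j (dehom n (MvPolynomial.X i)) = dehom n (pderiv (Fin.succ j) (MvPolynomial.X i)) := by
    intro i
    induction i using Fin.cases with
    | zero =>
        have h0 : (Fin.succ j) ≠ 0 := Fin.succ_ne_zero j
        simp [dehom, MvPolynomial.pderiv_X, Pi.single_apply, Ne.symm h0]
    | succ t =>
        rcases eq_or_ne t j with rfl | ht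
        · simp [dehom]
        · have : Fin.succ j ≠ Fin.succ t := fun h => (Ne.symm ht) (Fin.succ_injective n h)
          simp [dehom, MvPolynomial.pderiv_X, Pi.single_apply, Ne.symm ht, this]
  induction p using MvPolynomial.induction_on with
  | C a => simp [dehom]
  | add p q hp hq => simp [map_add, hp, hq]
  | mul_X p i hp => simp only [map_mul, pderiv_mul, map_add, hp, hX]

lemma pd_localize {n : ℕ} (j : Fin n) (p : MvPolynomial (Fin (n+1)) ℂ) :
    pd j (localize n p) = localize n (pderiv (Fin.succ j) p) := by
  rw [localize_eq, pd_coe, pderiv_dehom, ← localize_eq]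

lemma det_expand {R : Type*} [CommRing R] {n k : ℕ}
    (A : Fin k → Fin n → R) (W : Fin n → Fin k → R) :
    (Matrix.of fun s t : Fin k => ∑ a, A s a * W a t).det
      = ∑ p ∈ Fintype.piFinset (fun _ : Fin k => (Finset.univ : Finset (Fin n))),
          (∏ s, A s (p s)) • (Matrix.of fun s t : Fin k => W (p s) t).det := by
  show Matrix.detRowAlternating.toMultilinearMap _ = _
  have h : (Matrix.of fun s t : Fin k => ∑ a, A s a * W a t)
      = fun s : Fin k => ∑ a, A s a • W a := by
    funext s t
    simp [Finset.sum_apply]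
  rw [h]
  rw [MultilinearMap.map_sum (Matrix.detRowAlternating).toMultilinearMap
    (g := fun s a => A s a • W a)]
  refine Finset.sum_congr rfl fun p _ => ?_
  exact (Matrix.detRowAlternating).toMultilinearMap.map_smul_univ (fun s => A s (p s))
    (fun s => W (p s))

lemma det_conj_mem {R : Type*} [CommRing R] {n k : ℕ} (G : Matrix (Fin n) (Fin n) R)
    (A B : Fin k → Fin n → R) :
    (Matrix.of fun s t : Fin k => ∑ a, ∑ b, A s a * G a b * B t b).det
      ∈ minorsIdeal G k := by
  have h1 : (Matrix.of fun s t : Fin k => ∑ a, ∑ b, A s a * G a b * B t b)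
      = Matrix.of fun s t : Fin k => ∑ a, A s a * (∑ b, G a b * B t b) := by
    funext s t
    simp only [Matrix.of_apply, Finset.mul_sum]
    exact Finset.sum_congr rfl fun a _ => Finset.sum_congr rfl fun b _ => by ring
  rw [h1, det_expand]
  refine Ideal.sum_mem _ fun p _ => ?_
  rw [smul_eq_mul]
  refine Ideal.mul_mem_left _ _ ?_
  have h2 : (Matrix.of fun s t : Fin k => ∑ b, G (p s) b * B t b).det
      = (Matrix.of fun t s : Fin k => ∑ b, B t b * G (p s) b).det := by
    rw [← Matrix.det_transpose]
    congr 1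
    funext t s
    simp only [Matrix.transpose_apply, Matrix.of_apply]
    exact Finset.sum_congr rfl fun b _ => by ring
  rw [h2, det_expand (fun t b => B t b) (fun b s => G (p s) b)]
  refine Ideal.sum_mem _ fun q _ => ?_
  rw [smul_eq_mul]
  refine Ideal.mul_mem_left _ _ ?_
  have h3 : (Matrix.of fun t s : Fin k => G (p s) (q t)).det
      = (G.submatrix p q).det := by
    rw [← Matrix.det_transpose]
    congr 1
  rw [h3]
  exact Ideal.subset_span ⟨p, q, rfl⟩

lemma det_sub_det_mem {R : Type*} [CommRing R] {k : ℕ} (I : Ideal R)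
    (M N : Matrix (Fin k) (Fin k) R) (h : ∀ i j, M i j - N i j ∈ I) :
    M.det - N.det ∈ I := by
  rw [← Ideal.Quotient.eq]
  rw [(Ideal.Quotient.mk I).map_det, (Ideal.Quotient.mk I).map_det]
  congr 1
  ext i j
  simpa [Ideal.Quotient.eq] using h i j

end Aux

open MvPolynomial in
/-- Let `f` be homogeneous of degree `d` with an isolated singular
point at `a = (1:0:...:0)`, and let `g(y) = f(1,y)` be the local equation.  Modulo
the Tjurina ideal `(g, g₁, ..., gₙ)` the matrix `Hess(f)(1,y)` can be transformed
into the matrix with first row and column zero and lower-right block `Hess(g)`;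
consequently, for each `k` the localization at `a` of `J_f + h_k(f)` equals the
ideal of `𝒪_n` generated by `g`, its partials `g₁,...,gₙ`, and all `k × k` minors
of the local Hessian matrix `(g_{ij})`. -/
theorem localization_of_hessian_ideal {n d : ℕ} (f : MvPolynomial (Fin (n + 1)) ℂ)
    (hf : f.IsHomogeneous d)
    (hsing : MvPolynomial.eval (fun i => if i = 0 then (1 : ℂ) else 0) f = 0 ∧
      ∀ j, MvPolynomial.eval (fun i => if i = 0 then (1 : ℂ) else 0) (pderiv j f) = 0)
    (hiso : Module.Finite ℂ (MvPowerSeries (Fin n) ℂ ⧸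
      (Ideal.span {localize n f} ⊔ jacobianIdeal (localize n f))))
    (k : ℕ) (hk1 : 1 ≤ k) (hk2 : k ≤ n + 1) :
    Ideal.map (localize n)
        (Ideal.span (Set.range fun i => pderiv i f) ⊔
          minorsIdeal (Matrix.of fun i j : Fin (n + 1) => pderiv i (pderiv j f)) k) =
      Ideal.span {localize n f} ⊔ jacobianIdeal (localize n f) ⊔
        minorsIdeal (hessianMatrix (localize n f)) k := by
  clear hiso hk1 hk2
  set O := MvPowerSeries (Fin n) ℂ
  set φ := localize n with hφdef
  set g := φ f with hgdef
  set Y : Fin n → O := fun a => MvPowerSeries.X a with hYdef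
  set G := hessianMatrix g with hGdef
  set I : Ideal O := Ideal.span {g} ⊔ jacobianIdeal g with hIdef
  -- basic values of φ on variables
  have φX0 : φ (X (0 : Fin (n+1))) = 1 := by
    simp [hφdef, localize]
  have φXs : ∀ a : Fin n, φ (X (Fin.succ a)) = Y a := by
    intro a; simp [hφdef, localize, hYdef]
  have hpdg : ∀ a : Fin n, pd a g = φ (pderiv (Fin.succ a) f) := fun a =>
    (pd_localize a f)
  have hpdg_mem : ∀ a : Fin n, pd a g ∈ I := by
    intro a
    exact Ideal.mem_sup_right (Ideal.subset_span ⟨a, rfl⟩)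
  have hg_mem : g ∈ I := Ideal.mem_sup_left (Ideal.subset_span rfl)
  have hG2 : ∀ a b : Fin n, G a b = φ (pderiv (Fin.succ a) (pderiv (Fin.succ b) f)) := by
    intro a b
    show pd a (pd b g) = _
    rw [hpdg b, pd_localize]
  have hGsymm : ∀ a b : Fin n, G a b = G b a := by
    intro a b
    rw [hG2, hG2, pderiv_comm']
  -- Euler identity, localized
  have e1 : (d : O) * g = φ (pderiv 0 f) + ∑ a, Y a * pd a g := by
    have h := congrArg φ (euler hf)
    rw [map_sum, map_nsmul, nsmul_eq_mul] at h
    rw [Fin.sum_univ_succ] at h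
    simp only [map_mul, φX0, φXs, one_mul] at h
    simp_rw [hpdg]
    exact h.symm
  have hφ0_eq : φ (pderiv 0 f) = (d : O) * g - ∑ a, Y a * pd a g := by
    rw [e1]; ring
  have hφ0_mem : φ (pderiv 0 f) ∈ I := by
    rw [hφ0_eq]
    refine sub_mem (Ideal.mul_mem_left _ _ hg_mem) (Ideal.sum_mem _ fun a _ => ?_)
    exact Ideal.mul_mem_left _ _ (hpdg_mem a)
  -- second-order Euler identity (polynomial level)
  have e2 : ∀ j : Fin (n+1), ∑ i, MvPolynomial.X i * pderiv i (pderiv j f)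
      = d • pderiv j f - pderiv j f := by
    intro j
    have h := congrArg (pderiv j) (euler hf)
    rw [map_sum, map_nsmul] at h
    have hterm : ∀ i : Fin (n+1), pderiv j (MvPolynomial.X i * pderiv i f)
        = (if i = j then 1 else 0) * pderiv j f + MvPolynomial.X i * pderiv i (pderiv j f) := by
      intro i
      rw [pderiv_mul, pderiv_comm' i j, MvPolynomial.pderiv_X, Pi.single_apply]
      rcases eq_or_ne i j with rfl | hij
      · simp
      · simp [hij, Ne.symm hij]
    rw [Finset.sum_congr rfl fun i _ => hterm i, Finset.sum_add_distrib] at h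
    have hfirst : ∑ i : Fin (n+1), (if i = j then 1 else 0) * pderiv j f = pderiv j f := by
      simp [ite_mul, Finset.sum_ite_eq']
    rw [hfirst] at h
    exact eq_sub_of_add_eq' h
  -- second-order Euler, localized
  have E2 : ∀ j : Fin (n+1), φ (pderiv 0 (pderiv j f))
      = (d : O) * φ (pderiv j f) - φ (pderiv j f)
        - ∑ a, Y a * φ (pderiv (Fin.succ a) (pderiv j f)) := by
    intro j
    have h := congrArg φ (e2 j)
    rw [map_sum, map_sub, map_nsmul, nsmul_eq_mul] at h
    rw [Fin.sum_univ_succ] at h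
    simp only [map_mul, φX0, φXs, one_mul] at h
    rw [← h]
    ring
  have hH0s : ∀ j' : Fin n, φ (pderiv 0 (pderiv (Fin.succ j') f))
      = (d : O) * pd j' g - pd j' g - ∑ a, Y a * G a j' := by
    intro j'
    rw [E2 (Fin.succ j'), ← hpdg]
    congr 1
    exact Finset.sum_congr rfl fun a _ => by rw [hG2]
  -- the congruence matrix
  set v : Fin (n+1) → Fin n → O :=
    fun i => Fin.cases (fun a => -(Y a)) (fun i' a => if a = i' then 1 else 0) i with hvdef
  have hv0 : ∀ a, v 0 a = -(Y a) := fun a => by simp [hvdef]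
  have hvs : ∀ (i' : Fin n) a, v (Fin.succ i') a = if a = i' then 1 else 0 := fun i' a => by
    simp [hvdef]
  set N : Matrix (Fin (n+1)) (Fin (n+1)) O :=
    Matrix.of (fun i j => ∑ a, ∑ b, v i a * G a b * v j b) with hNdef
  have hNss : ∀ i' j' : Fin n, N (Fin.succ i') (Fin.succ j') = G i' j' := by
    intro i' j'
    show ∑ a, ∑ b, v (Fin.succ i') a * G a b * v (Fin.succ j') b = _
    simp [hvs, ite_mul, mul_ite, Finset.sum_ite_eq']
  have hN0s : ∀ j' : Fin n, N 0 (Fin.succ j') = -∑ a, Y a * G a j' := by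
    intro j'
    show ∑ a, ∑ b, v 0 a * G a b * v (Fin.succ j') b = _
    rw [← Finset.sum_neg_distrib]
    refine Finset.sum_congr rfl fun a _ => ?_
    simp [hv0, hvs, ite_mul, mul_ite, Finset.sum_ite_eq']
    exact neg_mul _ _
  have hNs0 : ∀ i' : Fin n, N (Fin.succ i') 0 = -∑ a, Y a * G a i' := by
    intro i'
    show ∑ a, ∑ b, v (Fin.succ i') a * G a b * v 0 b = _
    have hterm : ∀ a, ∑ b, v (Fin.succ i') a * G a b * v 0 b
        = if a = i' then -∑ b, Y b * G i' b else 0 := by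
      intro a
      rcases eq_or_ne a i' with rfl | ha
      · rw [if_pos rfl, ← Finset.sum_neg_distrib]
        refine Finset.sum_congr rfl fun b _ => ?_
        rw [hvs, hv0, if_pos rfl]; ring
      · rw [if_neg ha]
        refine Finset.sum_eq_zero fun b _ => ?_
        rw [hvs, if_neg ha]; ring
    rw [Finset.sum_congr rfl fun a _ => hterm a, Finset.sum_ite_eq' Finset.univ i',
      if_pos (Finset.mem_univ i')]
    rw [neg_inj]
    exact Finset.sum_congr rfl fun b _ => by rw [hGsymm]
  have hN00 : N 0 0 = ∑ a, ∑ b, Y a * G a b * Y b := by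
    show ∑ a, ∑ b, v 0 a * G a b * v 0 b = _
    refine Finset.sum_congr rfl fun a _ => Finset.sum_congr rfl fun b _ => ?_
    rw [hv0, hv0]; ring
  -- the central claim: entries of the localized Hessian agree with N modulo I
  have claim : ∀ i j : Fin (n+1), φ (pderiv i (pderiv j f)) - N i j ∈ I := by
    have case0s : ∀ j' : Fin n, φ (pderiv 0 (pderiv (Fin.succ j') f)) - N 0 (Fin.succ j') ∈ I := by
      intro j'
      rw [hH0s j', hN0s j']
      have : (d : O) * pd j' g - pd j' g - (∑ a, Y a * G a j') - -∑ a, Y a * G a j'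
          = (d : O) * pd j' g - pd j' g := by ring
      rw [this]
      exact sub_mem (Ideal.mul_mem_left _ _ (hpdg_mem j')) (hpdg_mem j')
    intro i j
    induction i using Fin.cases with
    | succ i' =>
        induction j using Fin.cases with
        | succ j' =>
            rw [hNss, ← hG2]
            rw [sub_self]
            exact zero_mem I
        | zero =>
            have hsw : φ (pderiv (Fin.succ i') (pderiv 0 f))
                = φ (pderiv 0 (pderiv (Fin.succ i') f)) :=
              congrArg φ (pderiv_comm' _ _ f)
            rw [hsw, hH0s i', hNs0 i']
            have : (d : O) * pd i' g - pd i' g - (∑ a, Y a * G a i') - -∑ a, Y a * G a i'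
                = (d : O) * pd i' g - pd i' g := by ring
            rw [this]
            exact sub_mem (Ideal.mul_mem_left _ _ (hpdg_mem i')) (hpdg_mem i')
    | zero =>
        induction j using Fin.cases with
        | succ j' => exact case0s j'
        | zero =>
            rw [E2 0, hN00]
            have hsw : ∀ a : Fin n, φ (pderiv (Fin.succ a) (pderiv 0 f))
                = (d : O) * pd a g - pd a g - ∑ b, Y b * G b a := by
              intro a
              rw [congrArg φ (pderiv_comm' _ _ f), hH0s a]
            rw [show (∑ a, Y a * φ (pderiv (Fin.succ a) (pderiv 0 f)))
                = ∑ a, Y a * ((d : O) * pd a g - pd a g - ∑ b, Y b * G b a) from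
              Finset.sum_congr rfl fun a _ => by rw [hsw a]]
            have hcancel : ∑ a, Y a * ∑ b, Y b * G b a = ∑ a, ∑ b, Y a * G a b * Y b := by
              rw [Finset.sum_congr rfl fun a _ => Finset.mul_sum Finset.univ (fun b => Y b * G b a) (Y a)]
              rw [Finset.sum_comm]
              exact Finset.sum_congr rfl fun a _ => Finset.sum_congr rfl fun b _ => by ring
            have h1 : ∑ a, Y a * ((d : O) * pd a g - pd a g - ∑ b, Y b * G b a)
                = ∑ a, Y a * ((d : O) * pd a g - pd a g) - ∑ a, ∑ b, Y a * G a b * Y b := by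
              rw [← hcancel, ← Finset.sum_sub_distrib]
              exact Finset.sum_congr rfl fun a _ => by ring
            rw [h1]
            have h2 : (d : O) * φ (pderiv 0 f) - φ (pderiv 0 f) -
                  ((∑ a, Y a * ((d : O) * pd a g - pd a g)) - ∑ a, ∑ b, Y a * G a b * Y b) -
                  ∑ a, ∑ b, Y a * G a b * Y b
                = ((d : O) * φ (pderiv 0 f) - φ (pderiv 0 f))
                  - ∑ a, Y a * ((d : O) * pd a g - pd a g) := by ring
            rw [h2]
            refine sub_mem (sub_mem (Ideal.mul_mem_left _ _ hφ0_mem) hφ0_mem)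
              (Ideal.sum_mem _ fun a _ => Ideal.mul_mem_left _ _ ?_)
            exact sub_mem (Ideal.mul_mem_left _ _ (hpdg_mem a)) (hpdg_mem a)
  -- assembly
  set Hp : Matrix (Fin (n+1)) (Fin (n+1)) (MvPolynomial (Fin (n+1)) ℂ) :=
    Matrix.of (fun i j => pderiv i (pderiv j f)) with hHpdef
  apply le_antisymm
  · -- localized ideal is contained in the local Hessian ideal
    rw [Ideal.map_sup]
    apply sup_le
    · rw [Ideal.map_span, Ideal.span_le]
      rintro _ ⟨_, ⟨i, rfl⟩, rfl⟩
      induction i using Fin.cases with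
      | zero => exact Ideal.mem_sup_left hφ0_mem
      | succ a =>
          refine Ideal.mem_sup_left ?_
          rw [← hpdg a]
          exact hpdg_mem a
    · rw [minorsIdeal, Ideal.map_span, Ideal.span_le]
      rintro _ ⟨x, ⟨r, c, rfl⟩, rfl⟩
      rw [AlgHom.map_det, AlgHom.mapMatrix_apply, ← Matrix.submatrix_map]
      have hdiff : ((Hp.map φ).submatrix r c).det - (N.submatrix r c).det ∈ I :=
        det_sub_det_mem I _ _ (fun s t => claim (r s) (c t))
      have hminor : (N.submatrix r c).det ∈ minorsIdeal G k := by
        have hNsub : N.submatrix r c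
            = Matrix.of fun s t => ∑ a, ∑ b, (v (r s) a) * G a b * (v (c t) b) := rfl
        rw [hNsub]
        exact det_conj_mem G _ _
      have : ((Hp.map φ).submatrix r c).det
          = (((Hp.map φ).submatrix r c).det - (N.submatrix r c).det)
            + (N.submatrix r c).det := by ring
      rw [this]
      exact add_mem (Ideal.mem_sup_left hdiff) (Ideal.mem_sup_right hminor)
  · -- the local Hessian ideal is contained in the localized ideal
    refine sup_le (sup_le ?_ ?_) ?_
    · rw [Ideal.span_le]
      intro x hx
      rw [Set.mem_singleton_iff] at hx
      subst hx
      by_cases hd : d = 0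
      · -- degree zero: f is the zero polynomial
        subst hd
        have hm0 : ∀ m : Fin (n+1) →₀ ℕ, coeff m f ≠ 0 → m = 0 := by
          intro m hm
          have h := hf hm
          rw [Finsupp.weight_apply, Finsupp.sum_fintype _ _ (fun _ => rfl)] at h
          simp only [smul_eq_mul, mul_one] at h
          ext i
          have := Finset.sum_eq_zero_iff.mp h i (Finset.mem_univ i)
          simpa using this
        have hfC : f = MvPolynomial.C (MvPolynomial.coeff 0 f) := by
          apply MvPolynomial.ext
          intro m
          rw [MvPolynomial.coeff_C]
          rcases eq_or_ne m 0 with rfl | hm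
          · rw [if_pos rfl]
          · rw [if_neg (Ne.symm hm)]
            by_contra h
            exact hm (hm0 m h)
        have hc0 : MvPolynomial.coeff 0 f = 0 := by
          have h := hsing.1
          rw [hfC, eval_C] at h
          exact h
        have : (localize n) f = 0 := by rw [hfC, hc0, map_zero, map_zero]
        rw [hgdef, hφdef] at *
        rw [this]
        exact zero_mem _
      · -- positive degree: use the Euler relation
        have hd1 : ((d:ℂ)⁻¹) • ((d : O) * g) = g := by
          rw [← map_natCast (algebraMap ℂ O) d, ← Algebra.smul_def, smul_smul,
            inv_mul_cancel₀ (by exact_mod_cast hd), one_smul]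
        rw [show g = ((d:ℂ)⁻¹) • ((d : O) * g) from hd1.symm, e1, Algebra.smul_def]
        refine Ideal.mul_mem_left _ _ (add_mem ?_ (Ideal.sum_mem _ fun a _ =>
          Ideal.mul_mem_left _ _ ?_))
        · exact Ideal.mem_map_of_mem φ
            (Ideal.mem_sup_left (Ideal.subset_span ⟨0, rfl⟩))
        · rw [hpdg a]
          exact Ideal.mem_map_of_mem φ
            (Ideal.mem_sup_left (Ideal.subset_span ⟨Fin.succ a, rfl⟩))
    · rw [jacobianIdeal, Ideal.span_le]
      rintro _ ⟨a, rfl⟩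
      show pd a g ∈ _
      rw [hpdg a]
      exact Ideal.mem_map_of_mem φ
        (Ideal.mem_sup_left (Ideal.subset_span ⟨Fin.succ a, rfl⟩))
    · rw [minorsIdeal, Ideal.span_le]
      rintro x ⟨r, c, rfl⟩
      have hGsub : G.submatrix r c
          = (Hp.map φ).submatrix (fun s => Fin.succ (r s)) (fun t => Fin.succ (c t)) := by
        refine Matrix.ext fun s t => ?_
        exact hG2 (r s) (c t)
      rw [hGsub, Matrix.submatrix_map, ← AlgHom.mapMatrix_apply, ← AlgHom.map_det]
      exact Ideal.mem_map_of_mem φ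
        (Ideal.mem_sup_right (Ideal.subset_span ⟨_, _, rfl⟩))
end
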